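/- Let M(t) = J_polar⁻¹(√δ, θ₀ + ωt)·exp(t·J_Γ)·J_polar(√δ, θ₀), where J_polar(r,θ) is the Jacobian of the Cartesian-to-polar change of variables, J_Γ = [[−2δ, 0], [−2β√δ, 0]], and ω = γ − βδ. Then M(t) admits the Floquet representation M(t) = Z(t)·e^{tR} with Z(t) = L(ωt) the rotation matrix by angle ωt (so Z is T-periodic with T = 2π/ω) and R = J_polar⁻¹(√δ, θ₀)·J_Γ·J_polar(√δ, θ₀) constant; moreover M(0) = I and the eigenvalues of R are −2δ and 0. -/

import Mathlib

/-!
The polar Jacobian at angle `θ₀ + φ` is the rotation `L(φ)` applied to the Jacobian at `θ₀`.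
Hence `M(t)` is `L(ωt)` times the conjugate of `exp(t J_Γ)` by `J_polar⁻¹(√δ, θ₀)`, and the
exponential commutes with conjugation, giving `M(t) = L(ωt) e^{tR}`. Being similar to the
triangular matrix `J_Γ`, `R` has characteristic polynomial `X² + 2δX`.
-/

open Polynomial

/-- Jacobian of the Cartesian-to-polar change of variables. -/
noncomputable def Jpolar (r θ : ℝ) : Matrix (Fin 2) (Fin 2) ℝ :=
  !![Real.cos θ, Real.sin θ; -Real.sin θ / r, Real.cos θ / r]

/-- Inverse of the Cartesian-to-polar Jacobian. -/
noncomputable def JpolarInv (r θ : ℝ) : Matrix (Fin 2) (Fin 2) ℝ :=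
  !![Real.cos θ, -r * Real.sin θ; Real.sin θ, r * Real.cos θ]

/-- Rotation matrix by angle `θ`. -/
noncomputable def rotMat (θ : ℝ) : Matrix (Fin 2) (Fin 2) ℝ :=
  !![Real.cos θ, -Real.sin θ; Real.sin θ, Real.cos θ]

/-- Linearization of the Hopf normal form in polar coordinates about the limit cycle. -/
noncomputable def JGamma (δ β : ℝ) : Matrix (Fin 2) (Fin 2) ℝ :=
  !![-2 * δ, 0; -2 * β * Real.sqrt δ, 0]

namespace Matrix

variable {n : Type*} [Fintype n] [DecidableEq n]

lemma charpoly_conj_of_mul_eq_one {R : Type*} [CommRing R] {P Q : Matrix n n R} (h : P * Q = 1)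
    (A : Matrix n n R) : (P * A * Q).charpoly = A.charpoly := by
  rw [charpoly_mul_comm, ← Matrix.mul_assoc, mul_eq_one_comm.mp h, Matrix.one_mul]

variable {𝔸 : Type*} [NormedCommRing 𝔸] [NormedAlgebra ℚ 𝔸] [CompleteSpace 𝔸]

lemma exp_conj_of_mul_eq_one {P Q : Matrix n n 𝔸} (h : P * Q = 1) (A : Matrix n n 𝔸) :
    NormedSpace.exp (P * A * Q) = P * NormedSpace.exp A * Q :=
  exp_units_conj ⟨P, Q, h, mul_eq_one_comm.mp h⟩ A

lemma conj_exp_smul_eq_mul_exp_smul_conj {P L : 𝔸 → Matrix n n 𝔸} {Q : Matrix n n 𝔸} {θ₀ : 𝔸}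
    (hP : ∀ φ, P (θ₀ + φ) = L φ * P θ₀) (hPQ : P θ₀ * Q = 1) (A : Matrix n n 𝔸) (ω t : 𝔸) :
    P (θ₀ + ω * t) * NormedSpace.exp (t • A) * Q =
      L (ω * t) * NormedSpace.exp (t • (P θ₀ * A * Q)) := by
  rw [← smul_mul_assoc, ← mul_smul_comm, exp_conj_of_mul_eq_one hPQ, hP]
  simp only [Matrix.mul_assoc]

end Matrix

section

open Matrix

lemma JpolarInv_mul_Jpolar {r : ℝ} (hr : r ≠ 0) (θ : ℝ) : JpolarInv r θ * Jpolar r θ = 1 := by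
  rw [JpolarInv, Jpolar, mul_fin_two, one_fin_two]
  ext i j
  fin_cases i <;> fin_cases j <;> simp [field, ← sq]

lemma JpolarInv_add (r θ φ : ℝ) : JpolarInv r (θ + φ) = rotMat φ * JpolarInv r θ := by
  rw [JpolarInv, JpolarInv, rotMat, mul_fin_two, Real.cos_add, Real.sin_add]
  ext i j
  fin_cases i <;> fin_cases j <;> simp <;> ring

lemma rotMat_mul_add_two_pi_div (ω t : ℝ) :
    rotMat (ω * (t + 2 * Real.pi / ω)) = rotMat (ω * t) := by
  rcases eq_or_ne ω 0 with rfl | hω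
  · simp
  · simp [rotMat, mul_add, mul_div_cancel₀ _ hω]

lemma JGamma_charpoly (δ β : ℝ) : (JGamma δ β).charpoly = X ^ 2 + C (2 * δ) * X := by
  simp [charpoly_fin_two, JGamma, trace_fin_two, det_fin_two]

end

theorem hopf_floquet_representation_general
    (δ β γ θ₀ : ℝ) (hδ : 0 < δ) :
    let ω := γ - β * δ
    let M : ℝ → Matrix (Fin 2) (Fin 2) ℝ := fun t =>
      JpolarInv (Real.sqrt δ) (θ₀ + ω * t) * NormedSpace.exp (t • JGamma δ β)
        * Jpolar (Real.sqrt δ) θ₀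
    let R : Matrix (Fin 2) (Fin 2) ℝ :=
      JpolarInv (Real.sqrt δ) θ₀ * JGamma δ β * Jpolar (Real.sqrt δ) θ₀
    (∀ t : ℝ, M t = rotMat (ω * t) * NormedSpace.exp (t • R)) ∧
    (∀ t : ℝ, rotMat (ω * (t + 2 * Real.pi / ω)) = rotMat (ω * t)) ∧
    M 0 = 1 ∧
    R.charpoly = X ^ 2 + C (2 * δ) * X := by
  intro ω M R
  have hJ := JpolarInv_mul_Jpolar (Real.sqrt_pos.mpr hδ).ne' θ₀
  refine ⟨Matrix.conj_exp_smul_eq_mul_exp_smul_conj (JpolarInv_add _ θ₀) hJ _ ω,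
    rotMat_mul_add_two_pi_div ω, by simp [M, hJ], ?_⟩
  rw [Matrix.charpoly_conj_of_mul_eq_one hJ, JGamma_charpoly]

/-- Floquet representation of the fundamental matrix of the Hopf normal form about its
limit cycle: `M(t) = Z(t) e^{tR}` with `Z(t) = L(ωt)` (`T`-periodic, `T = 2π/ω`) and
`R = J_polar⁻¹ J_Γ J_polar` constant; moreover `M(0) = I` and the eigenvalues of `R`
are `−2δ` and `0` (its characteristic polynomial is `X² + 2δX`). -/
theorem hopf_floquet_representation
    (δ β γ θ₀ : ℝ) (hδ : 0 < δ) (hω : γ - β * δ ≠ 0) :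
    let ω := γ - β * δ
    let M : ℝ → Matrix (Fin 2) (Fin 2) ℝ := fun t =>
      JpolarInv (Real.sqrt δ) (θ₀ + ω * t) * NormedSpace.exp (t • JGamma δ β)
        * Jpolar (Real.sqrt δ) θ₀
    let R : Matrix (Fin 2) (Fin 2) ℝ :=
      JpolarInv (Real.sqrt δ) θ₀ * JGamma δ β * Jpolar (Real.sqrt δ) θ₀
    (∀ t : ℝ, M t = rotMat (ω * t) * NormedSpace.exp (t • R)) ∧
    (∀ t : ℝ, rotMat (ω * (t + 2 * Real.pi / ω)) = rotMat (ω * t)) ∧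
    M 0 = 1 ∧
    R.charpoly = X ^ 2 + C (2 * δ) * X :=
  hopf_floquet_representation_general δ β γ θ₀ hδ
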